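/- Let K ⊆ ℝ^d be a convex body whose affine hull has dimension d' ≤ d, with centroid c, and let R₁, …, Rₙ ∈ ℝ^d. Assuming Grünbaum's inequality in dimension d', for every i the relative volume of {x ∈ K : ⟨x, Rᵢ⟩ ≥ ⟨c, Rᵢ⟩} within K is at least (d'/(d'+1))^{d'} ≥ 1/e. In particular, the centroid is simultaneously in the top (1 − (d'/(d'+1))^{d'})-quantile... equivalently is a (d'/(d'+1))^{d'}-quantile fair point for all n linear objectives simultaneously. -/

import Mathlib

/-!
Parametrize the affine span of `K` isometrically by `ℝ^{d'}`. Then `K` becomes a convex body `P`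
with nonempty interior, the `d'`-dimensional Hausdorff measure becomes a constant multiple of
Lebesgue measure, the centroid of `K` is the image of the centroid of `P` because averages commute
with affine maps, and the halfspace `⟪x, R⟫ ≥ ⟪c, R⟫` pulls back to a halfspace through the centroid
of `P`. Grünbaum's inequality for `P` thus transfers to `K`. The lower halfspace for `R` is the
upper one for `-R`, and `(m / (m + 1)) ^ m = (1 + 1 / m) ^ (-m) ≥ e⁻¹`.
-/

open MeasureTheory RealInnerProductSpace

open Set Module
open scoped ENNReal

theorem one_div_exp_one_le_div_add_one_pow (m : ℕ) : 1 / Real.exp 1 ≤ ((m : ℝ) / (m + 1)) ^ m := by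
  rcases eq_or_ne m 0 with rfl | hm
  · simpa using inv_le_one_of_one_le₀ (Real.one_le_exp zero_le_one)
  have hpow : ((m : ℝ) / (m + 1)) ^ m = 1 / (1 + (m : ℝ)⁻¹) ^ m := by
    rw [one_div, ← inv_pow, show 1 + (m : ℝ)⁻¹ = (m + 1) / m by field_simp, inv_div]
  rw [hpow]
  exact one_div_le_one_div_of_le (by positivity) Real.one_add_inv_pow_le_exp

theorem div_add_one_pow_le_one (m : ℕ) : ((m : ℝ) / (m + 1)) ^ m ≤ 1 :=
  pow_le_one₀ (by positivity) (div_le_one_of_le₀ (by linarith) (by positivity))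

theorem average_smul_measure {α E : Type*} [MeasurableSpace α] [NormedAddCommGroup E]
    [NormedSpace ℝ E] (μ : Measure α) (f : α → E) {c : ℝ≥0∞} (hc₀ : c ≠ 0) (hc : c ≠ ∞) :
    ⨍ x, f x ∂(c • μ) = ⨍ x, f x ∂μ := by
  rw [average_eq', average_eq', Measure.smul_apply, smul_smul, smul_eq_mul,
    ENNReal.mul_inv (.inl hc₀) (.inl hc), mul_right_comm, ENNReal.inv_mul_cancel hc₀ hc, one_mul]

theorem setAverage_smul_measure {α E : Type*} [MeasurableSpace α] [NormedAddCommGroup E]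
    [NormedSpace ℝ E] (μ : Measure α) (f : α → E) (s : Set α) {c : ℝ≥0∞} (hc₀ : c ≠ 0)
    (hc : c ≠ ∞) :
    ⨍ x in s, f x ∂(c • μ) = ⨍ x in s, f x ∂μ := by
  rw [Measure.restrict_smul, average_smul_measure _ _ hc₀ hc]

theorem Isometry.restrict_euclideanHausdorffMeasure {X Y : Type*} [EMetricSpace X]
    [MeasurableSpace X] [BorelSpace X] [EMetricSpace Y] [MeasurableSpace Y] [BorelSpace Y]
    {f : X → Y} (hf : Isometry f) (m : ℕ) {s : Set Y} (hs : MeasurableSet s) (hsf : s ⊆ range f) :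
    μHE[m].restrict s = (μHE[m].restrict (f ⁻¹' s)).map f := by
  rw [← Measure.restrict_map hf.continuous.measurable hs, hf.map_euclideanHausdorffMeasure,
    Measure.restrict_restrict_of_subset hsf]

theorem ContinuousAffineMap.average_map {E F : Type*} [NormedAddCommGroup E] [NormedSpace ℝ E]
    [CompleteSpace E] [MeasurableSpace E] [BorelSpace E] [NormedAddCommGroup F] [NormedSpace ℝ F]
    [CompleteSpace F] [MeasurableSpace F] [BorelSpace F] [SecondCountableTopology F]
    (g : E →ᴬ[ℝ] F) {μ : Measure E} [IsFiniteMeasure μ] [NeZero μ] (hμ : Integrable (fun x ↦ x) μ) :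
    ⨍ x, x ∂(μ.map g) = g (⨍ y, y ∂μ) := by
  have hg : ∀ y, g y = g.contLinear y + g 0 := fun y ↦ congrFun g.decomp y
  have hint : ∫ y, g y ∂μ = g.contLinear (∫ y, y ∂μ) + μ.real univ • g 0 := by
    rw [integral_congr_ae (Filter.Eventually.of_forall hg),
      integral_add (g.contLinear.integrable_comp hμ) (integrable_const _),
      g.contLinear.integral_comp_comm hμ, integral_const]
  have hμ₀ : μ.real univ ≠ 0 := (measureReal_univ_pos (μ := μ)).ne'
  rw [average_eq, average_eq,
    integral_map (f := fun x ↦ x) g.continuous.aemeasurable aemeasurable_id.aestronglyMeasurable,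
    Measure.real, Measure.map_apply g.continuous.measurable MeasurableSet.univ, preimage_univ,
    ← Measure.real, hint, hg ((μ.real univ)⁻¹ • _)]
  simp only [map_smul, smul_add, smul_smul, inv_mul_cancel₀ hμ₀, one_smul]

theorem AffineSubspace.exists_affineIsometry_range_eq {V : Type*} [NormedAddCommGroup V]
    [InnerProductSpace ℝ V] [FiniteDimensional ℝ V] (S : AffineSubspace ℝ V) {p : V} (hp : p ∈ S)
    {m : ℕ} (hm : finrank ℝ S.direction = m) :
    ∃ g : EuclideanSpace ℝ (Fin m) →ᵃⁱ[ℝ] V, range g = S := by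
  let L := ((stdOrthonormalBasis ℝ S.direction).reindex (finCongr hm)).repr
  refine ⟨(AffineIsometryEquiv.vaddConst ℝ p).toAffineIsometry.comp
    (S.direction.subtypeₗᵢ.comp L.symm.toLinearIsometry).toAffineIsometry, ?_⟩
  ext x
  constructor
  · rintro ⟨y, rfl⟩
    exact S.vadd_mem_of_mem_direction (L.symm y).2 hp
  · intro hx
    refine ⟨L ⟨x -ᵥ p, S.vsub_mem_direction hx hp⟩, ?_⟩
    simp

theorem AffineIsometry.interior_preimage_nonempty {F V : Type*} [NormedAddCommGroup F]
    [NormedSpace ℝ F] [FiniteDimensional ℝ F] [NormedAddCommGroup V] [NormedSpace ℝ V]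
    (g : F →ᵃⁱ[ℝ] V) {K : Set V} (hKc : Convex ℝ K) (hKne : K.Nonempty) (hKg : K ⊆ range g)
    (hdim : finrank ℝ (affineSpan ℝ K).direction = finrank ℝ F) :
    (interior (g ⁻¹' K)).Nonempty := by
  have himage : g '' (g ⁻¹' K) = K := image_preimage_eq_of_subset hKg
  have hspan : (vectorSpan ℝ (g ⁻¹' K)).map g.linear = vectorSpan ℝ K := by
    simpa [himage] using g.toAffineMap.map_vectorSpan (s := g ⁻¹' K)
  have hrank : finrank ℝ (vectorSpan ℝ (g ⁻¹' K)) = finrank ℝ F := by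
    rw [← hdim, direction_affineSpan, ← hspan,
      (Submodule.equivMapOfInjective _ g.linearIsometry.injective _).finrank_eq]
    rfl
  have hconv : Convex ℝ (g ⁻¹' K) := hKc.affine_preimage g.toAffineMap
  rw [hconv.interior_nonempty_iff_affineSpan_eq_top,
    AffineSubspace.affineSpan_eq_top_iff_vectorSpan_eq_top_of_nonempty ℝ _ _ (hKne.preimage' hKg)]
  exact Submodule.eq_top_of_finrank_eq hrank

theorem ContinuousAffineMap.preimage_setOf_inner_map_le {F V : Type*} [NormedAddCommGroup F]
    [InnerProductSpace ℝ F] [CompleteSpace F] [NormedAddCommGroup V] [InnerProductSpace ℝ V]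
    [CompleteSpace V] (g : F →ᴬ[ℝ] V) (a : F) (R : V) :
    g ⁻¹' {x | ⟪g a, R⟫ ≤ ⟪x, R⟫} =
      {y | ⟪a, g.contLinear.adjoint R⟫ ≤ ⟪y, g.contLinear.adjoint R⟫} := by
  ext y
  simp only [mem_preimage, mem_ofPred_eq]
  rw [← sub_nonneg, ← inner_sub_left, ← vsub_eq_sub, ← g.contLinear_map_vsub,
    ← ContinuousLinearMap.adjoint_inner_right, vsub_eq_sub, inner_sub_left, sub_nonneg]

def GrunbaumInequality (m : ℕ) (q : ℝ≥0∞) : Prop :=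
  ∀ P : Set (EuclideanSpace ℝ (Fin m)), IsCompact P → Convex ℝ P →
    (interior P).Nonempty → ∀ w : EuclideanSpace ℝ (Fin m), w ≠ 0 →
    ∀ c' : EuclideanSpace ℝ (Fin m), c' = (volume P).toReal⁻¹ • ∫ x in P, x →
    q * volume P ≤ volume (P ∩ {x | 0 ≤ ⟪w, x - c'⟫})

namespace GrunbaumInequality

variable {m : ℕ} {q : ℝ≥0∞}

theorem le_volume_inter_halfspace (hG : GrunbaumInequality m q) (hq : q ≤ 1)
    {P : Set (EuclideanSpace ℝ (Fin m))} (hP : IsCompact P) (hPc : Convex ℝ P)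
    (hPi : (interior P).Nonempty) (w : EuclideanSpace ℝ (Fin m)) :
    q * volume P ≤ volume (P ∩ {x | ⟪⨍ y in P, y, w⟫ ≤ ⟪x, w⟫}) := by
  rcases eq_or_ne w 0 with rfl | hw
  · simpa using mul_le_of_le_one_left zero_le hq
  convert hG P hP hPc hPi w hw _ (setAverage_eq _ _ _) using 3
  ext x
  rw [mem_ofPred_eq, mem_ofPred_eq, inner_sub_right, sub_nonneg, real_inner_comm,
    real_inner_comm w]

variable {V : Type*} [NormedAddCommGroup V] [InnerProductSpace ℝ V] [FiniteDimensional ℝ V]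
  [MeasurableSpace V] [BorelSpace V]

theorem le_euclideanHausdorffMeasure_halfspace (hG : GrunbaumInequality m q) (hq : q ≤ 1)
    {K : Set V} (hK : IsCompact K) (hKc : Convex ℝ K) (hKne : K.Nonempty)
    (hdim : finrank ℝ (affineSpan ℝ K).direction = m) (R : V) :
    q * μHE[m] K ≤ μHE[m] {x ∈ K | ⟪⨍ y in K, y ∂μHE[m], R⟫ ≤ ⟪x, R⟫} := by
  obtain ⟨p, hp⟩ := hKne
  obtain ⟨g, hg⟩ :=
    (affineSpan ℝ K).exists_affineIsometry_range_eq (subset_affineSpan ℝ K hp) hdim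
  have hKg : K ⊆ range g := hg ▸ subset_affineSpan ℝ K
  set P := g ⁻¹' K
  have hP : IsCompact P := g.isometry.isClosedEmbedding.isCompact_preimage hK
  have hPi : (interior P).Nonempty :=
    g.interior_preimage_nonempty hKc ⟨p, hp⟩ hKg (by rw [hdim, finrank_euclideanSpace_fin])
  have hμ : μHE[m].restrict K = (volume.restrict P).map g := by
    rw [g.isometry.restrict_euclideanHausdorffMeasure m hK.measurableSet hKg,
      EuclideanSpace.euclideanHausdorffMeasure_eq_volume]
  have hmeas {s : Set V} (hs : MeasurableSet s) : μHE[m] (s ∩ K) = volume (g ⁻¹' s ∩ P) := by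
    rw [← Measure.restrict_apply hs, hμ, Measure.map_apply g.continuous.measurable hs,
      Measure.restrict_apply (hs.preimage g.continuous.measurable)]
  have hμK : μHE[m] K = volume P := by simpa using hmeas MeasurableSet.univ
  rcases eq_or_ne (volume P) 0 with hP₀ | hP₀
  · simp [hμK, hP₀]
  have : NeZero (volume.restrict P) := ⟨by simpa using hP₀⟩
  have : IsFiniteMeasure (volume.restrict P) := ⟨by simpa using hP.measure_lt_top⟩
  have hc : ⨍ y in K, y ∂μHE[m] = g (⨍ y in P, y) := by
    rw [hμ]
    exact g.toContinuousAffineMap.average_map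
      (continuous_id.continuousOn.integrableOn_compact hP)
  have hH : MeasurableSet {x : V | ⟪g (⨍ y in P, y), R⟫ ≤ ⟪x, R⟫} :=
    (isClosed_le continuous_const (continuous_id.inner continuous_const)).measurableSet
  set w := g.toContinuousAffineMap.contLinear.adjoint R
  calc q * μHE[m] K
      ≤ volume (P ∩ {y | ⟪⨍ y in P, y, w⟫ ≤ ⟪y, w⟫}) := by
        rw [hμK]
        exact hG.le_volume_inter_halfspace hq hP (hKc.affine_preimage g.toAffineMap) hPi w
    _ = μHE[m] {x ∈ K | ⟪⨍ y in K, y ∂μHE[m], R⟫ ≤ ⟪x, R⟫} := by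
        rw [hc, ← ofPred_inter_eq_sep, hmeas hH, inter_comm,
          ← g.toContinuousAffineMap.preimage_setOf_inner_map_le]
        rfl

theorem le_hausdorffMeasure_halfspace (hG : GrunbaumInequality m q) (hq : q ≤ 1)
    {K : Set V} (hK : IsCompact K) (hKc : Convex ℝ K) (hKne : K.Nonempty)
    (hdim : finrank ℝ (affineSpan ℝ K).direction = m) (R : V) :
    q * μH[m] K ≤ μH[m] {x ∈ K | ⟪⨍ y in K, y ∂μH[m], R⟫ ≤ ⟪x, R⟫} := by
  have hκ := Measure.addHaarScalarFactor_volume_hausdorffMeasure_ne_zero m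
  have h := hG.le_euclideanHausdorffMeasure_halfspace hq hK hKc hKne hdim R
  rw [Measure.euclideanHausdorffMeasure_def, ENNReal.smul_def,
    setAverage_smul_measure _ _ _ (by exact_mod_cast hκ) ENNReal.coe_ne_top,
    Measure.smul_apply, Measure.smul_apply, smul_eq_mul, smul_eq_mul, mul_left_comm] at h
  exact (ENNReal.mul_le_mul_iff_right (by exact_mod_cast hκ) ENNReal.coe_ne_top).1 h

end GrunbaumInequality

theorem centroid_quantile_fair_general {d d' n : ℕ}
    (K : Set (EuclideanSpace ℝ (Fin d)))
    (hK : IsCompact K) (hKc : Convex ℝ K) (hKne : K.Nonempty)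
    (hdim : Module.finrank ℝ (affineSpan ℝ K).direction = d')
    (c : EuclideanSpace ℝ (Fin d))
    (hc : c = (μH[(d' : ℝ)] K).toReal⁻¹ • ∫ x in K, x ∂μH[(d' : ℝ)])
    (R : Fin n → EuclideanSpace ℝ (Fin d))
    (hGrun : ∀ P : Set (EuclideanSpace ℝ (Fin d')), IsCompact P → Convex ℝ P →
      (interior P).Nonempty → ∀ w : EuclideanSpace ℝ (Fin d'), w ≠ 0 →
      ∀ c' : EuclideanSpace ℝ (Fin d'), c' = (volume P).toReal⁻¹ • ∫ x in P, x →
      ENNReal.ofReal (((d' : ℝ) / (d' + 1)) ^ d') * volume P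
        ≤ volume (P ∩ {x | 0 ≤ ⟪w, x - c'⟫})) :
    (∀ i, ENNReal.ofReal (((d' : ℝ) / (d' + 1)) ^ d') * μH[(d' : ℝ)] K
        ≤ μH[(d' : ℝ)] {x ∈ K | ⟪c, R i⟫ ≤ ⟪x, R i⟫}) ∧
    (∀ i, ENNReal.ofReal (((d' : ℝ) / (d' + 1)) ^ d') * μH[(d' : ℝ)] K
        ≤ μH[(d' : ℝ)] {x ∈ K | ⟪x, R i⟫ ≤ ⟪c, R i⟫}) ∧
    1 / Real.exp 1 ≤ ((d' : ℝ) / (d' + 1)) ^ d' := by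
  have hG : GrunbaumInequality d' (ENNReal.ofReal (((d' : ℝ) / (d' + 1)) ^ d')) := hGrun
  have hq : ENNReal.ofReal (((d' : ℝ) / (d' + 1)) ^ d') ≤ 1 :=
    ENNReal.ofReal_le_one.2 (div_add_one_pow_le_one d')
  have hfair := hG.le_hausdorffMeasure_halfspace hq hK hKc hKne hdim
  rw [← Measure.real, ← setAverage_eq] at hc
  subst hc
  refine ⟨fun i ↦ hfair (R i), fun i ↦ ?_, one_div_exp_one_le_div_add_one_pow d'⟩
  simpa only [inner_neg_right, neg_le_neg_iff] using hfair (-R i)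

theorem centroid_quantile_fair {d d' n : ℕ}
    (K : Set (EuclideanSpace ℝ (Fin d)))
    (hK : IsCompact K) (hKc : Convex ℝ K) (hKne : K.Nonempty)
    (hd' : d' ≤ d)
    (hdim : Module.finrank ℝ (affineSpan ℝ K).direction = d')
    (c : EuclideanSpace ℝ (Fin d))
    (hc : c = (μH[(d' : ℝ)] K).toReal⁻¹ • ∫ x in K, x ∂μH[(d' : ℝ)])
    (R : Fin n → EuclideanSpace ℝ (Fin d))
    (hGrun : ∀ P : Set (EuclideanSpace ℝ (Fin d')), IsCompact P → Convex ℝ P →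
      (interior P).Nonempty → ∀ w : EuclideanSpace ℝ (Fin d'), w ≠ 0 →
      ∀ c' : EuclideanSpace ℝ (Fin d'), c' = (volume P).toReal⁻¹ • ∫ x in P, x →
      ENNReal.ofReal (((d' : ℝ) / (d' + 1)) ^ d') * volume P
        ≤ volume (P ∩ {x | 0 ≤ ⟪w, x - c'⟫})) :
    (∀ i, ENNReal.ofReal (((d' : ℝ) / (d' + 1)) ^ d') * μH[(d' : ℝ)] K
        ≤ μH[(d' : ℝ)] {x ∈ K | ⟪c, R i⟫ ≤ ⟪x, R i⟫}) ∧
    (∀ i, ENNReal.ofReal (((d' : ℝ) / (d' + 1)) ^ d') * μH[(d' : ℝ)] K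
        ≤ μH[(d' : ℝ)] {x ∈ K | ⟪x, R i⟫ ≤ ⟪c, R i⟫}) ∧
    1 / Real.exp 1 ≤ ((d' : ℝ) / (d' + 1)) ^ d' :=
  centroid_quantile_fair_general K hK hKc hKne hdim c hc R hGrun
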